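/- Let μ, λ ≥ 0 with λ + μ ≤ 1, and suppose X, X' ~ Poisson(μ) and Y, Y' ~ Poisson(λ) are mutually independent. Then Δ := E[|X−Y| + |X'−Y'| − |X−X'| − |Y−Y'|] ≥ (1/20)·(λ−μ)². -/

import Mathlib

open MeasureTheory ProbabilityTheory

/-- The Poisson distribution with mean `m ≥ 0`, as a measure on `ℝ` supported on `ℕ`. -/
noncomputable def poissonRealMeasure (m : ℝ) : Measure ℝ :=
  Measure.sum fun k : ℕ =>
    ENNReal.ofReal (Real.exp (-m) * m ^ k / (Nat.factorial k : ℝ)) • Measure.dirac (k : ℝ)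

/-!
Writing `|x - y|` as the length of the interval between `x` and `y` and applying Tonelli, for
independent `U ~ P` and `V ~ Q` with distribution functions `F` and `G` one gets
`E|U - V| = ∫ F (1 - G) + (1 - F) G`. Hence the energy identity
`2 E|X - Y| - E|X - X'| - E|Y - Y'| = 2 ∫ (F - G)²`. For the two Poisson laws `F = exp (-m)`
and `G = exp (-l)` on `[0, 1)`, so the gap is at least `2 (exp (-m) - exp (-l))²`, and
`exp (-m) - exp (-l) ≥ exp (-1) (l - m) ≥ (l - m) / 3` for `m ≤ l ≤ 1`.
-/

open Set
open scoped ENNReal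

lemma ofReal_abs_sub_eq_add (x y : ℝ) :
    ENNReal.ofReal |x - y| = ENNReal.ofReal (y - x) + ENNReal.ofReal (x - y) := by
  rcases le_total x y with h | h
  · rw [abs_of_nonpos (by linarith), ENNReal.ofReal_of_nonpos (by linarith : x - y ≤ 0)]; simp
  · rw [abs_of_nonneg (by linarith), ENNReal.ofReal_of_nonpos (by linarith : y - x ≤ 0)]; simp

lemma lintegral_ofReal_sub_eq_lintegral_measure {α : Type*} [MeasurableSpace α] (ν : Measure α)
    [SFinite ν] {f g : α → ℝ} (hf : Measurable f) (hg : Measurable g) :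
    ∫⁻ z, ENNReal.ofReal (g z - f z) ∂ν = ∫⁻ t, ν {z | f z ≤ t ∧ t < g z} := by
  have hS : MeasurableSet {p : α × ℝ | f p.1 ≤ p.2 ∧ p.2 < g p.1} :=
    (measurableSet_le (hf.comp measurable_fst) measurable_snd).inter
      (measurableSet_lt measurable_snd (hg.comp measurable_fst))
  simp_rw [← Real.volume_Ico]
  exact (Measure.prod_apply hS).symm.trans (Measure.prod_apply_symm hS)

lemma lintegral_ofReal_abs_sub_eq (ν : Measure (ℝ × ℝ)) [SFinite ν] :
    ∫⁻ z, ENNReal.ofReal |z.1 - z.2| ∂ν =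
      (∫⁻ t, ν (Iic t ×ˢ Ioi t)) + ∫⁻ t, ν (Ioi t ×ˢ Iic t) := by
  simp_rw [ofReal_abs_sub_eq_add]
  rw [lintegral_add_left (by fun_prop),
    lintegral_ofReal_sub_eq_lintegral_measure ν measurable_fst measurable_snd,
    lintegral_ofReal_sub_eq_lintegral_measure ν measurable_snd measurable_fst]
  have hswap (t : ℝ) : {z : ℝ × ℝ | z.2 ≤ t ∧ t < z.1} = Ioi t ×ˢ Iic t :=
    ext fun _ => and_comm
  simp only [hswap]
  rfl

noncomputable def meanAbsDiff (P Q : Measure ℝ) : ℝ≥0∞ :=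
  ∫⁻ z, ENNReal.ofReal |z.1 - z.2| ∂(P.prod Q)

noncomputable def cramerDist (P Q : Measure ℝ) : ℝ≥0∞ :=
  ∫⁻ t, ENNReal.ofReal ((cdf P t - cdf Q t) ^ 2)

section Energy

variable (P Q : Measure ℝ) [IsProbabilityMeasure P] [IsProbabilityMeasure Q]

lemma measure_Ioi_eq_ofReal_one_sub_cdf (t : ℝ) : P (Ioi t) = ENNReal.ofReal (1 - cdf P t) := by
  rw [← compl_Iic, ← ofReal_measureReal, probReal_compl_eq_one_sub measurableSet_Iic, cdf_eq_real]

lemma meanAbsDiff_eq_lintegral_cdf :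
    meanAbsDiff P Q =
      ∫⁻ t, ENNReal.ofReal (cdf P t * (1 - cdf Q t) + (1 - cdf P t) * cdf Q t) := by
  have hP := (monotone_cdf P).measurable
  have hQ := (monotone_cdf Q).measurable
  rw [meanAbsDiff, lintegral_ofReal_abs_sub_eq]
  simp only [Measure.prod_prod, ← ofReal_cdf, measure_Ioi_eq_ofReal_one_sub_cdf]
  rw [← lintegral_add_left (by fun_prop)]
  refine lintegral_congr fun t => ?_
  have hP' : 0 ≤ 1 - cdf P t := sub_nonneg.2 (cdf_le_one P t)
  have hQ' : 0 ≤ 1 - cdf Q t := sub_nonneg.2 (cdf_le_one Q t)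
  rw [ENNReal.ofReal_add (mul_nonneg (cdf_nonneg P t) hQ') (mul_nonneg hP' (cdf_nonneg Q t)),
    ENNReal.ofReal_mul (cdf_nonneg P t), ENNReal.ofReal_mul hP']

lemma two_mul_meanAbsDiff_eq :
    2 * meanAbsDiff P Q = meanAbsDiff P P + meanAbsDiff Q Q + 2 * cramerDist P Q := by
  have hP := (monotone_cdf P).measurable
  have hQ := (monotone_cdf Q).measurable
  simp only [meanAbsDiff_eq_lintegral_cdf, cramerDist]
  rw [← lintegral_const_mul _ (by fun_prop), ← lintegral_const_mul _ (by fun_prop),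
    ← lintegral_add_left (by fun_prop), ← lintegral_add_left (by fun_prop)]
  refine lintegral_congr fun t => ?_
  have := cdf_nonneg P t; have := cdf_le_one P t; have := cdf_nonneg Q t; have := cdf_le_one Q t
  rw [← ENNReal.ofReal_ofNat, ← ENNReal.ofReal_mul zero_le_two, ← ENNReal.ofReal_mul zero_le_two,
    ← ENNReal.ofReal_add (by positivity) (by positivity),
    ← ENNReal.ofReal_add (by positivity) (by positivity)]
  ring_nf

variable {P Q}

lemma cramerDist_ne_top (h : meanAbsDiff P Q ≠ ∞) : cramerDist P Q ≠ ∞ := by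
  have h2 : 2 * meanAbsDiff P Q ≠ ∞ := ENNReal.mul_ne_top (by norm_num) h
  rw [two_mul_meanAbsDiff_eq] at h2
  exact (ENNReal.lt_top_of_mul_ne_top_right (ENNReal.add_ne_top.1 h2).2 two_ne_zero).ne

lemma two_mul_toReal_meanAbsDiff (h : meanAbsDiff P Q ≠ ∞) :
    2 * (meanAbsDiff P Q).toReal =
      (meanAbsDiff P P).toReal + (meanAbsDiff Q Q).toReal + 2 * (cramerDist P Q).toReal := by
  have h2 : 2 * meanAbsDiff P Q ≠ ∞ := ENNReal.mul_ne_top (by norm_num) h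
  rw [two_mul_meanAbsDiff_eq] at h2
  obtain ⟨hPQ, hC⟩ := ENNReal.add_ne_top.1 h2
  obtain ⟨hP, hQ⟩ := ENNReal.add_ne_top.1 hPQ
  have := congrArg ENNReal.toReal (two_mul_meanAbsDiff_eq P Q)
  rwa [ENNReal.toReal_mul, ENNReal.toReal_add hPQ hC, ENNReal.toReal_add hP hQ,
    ENNReal.toReal_mul] at this

end Energy

lemma poissonRealMeasure_eq_map {m : ℝ} (hm : 0 ≤ m) :
    poissonRealMeasure m = (poissonMeasure m.toNNReal).map (Nat.cast : ℕ → ℝ) := by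
  rw [poissonMeasure, Measure.map_sum measurable_from_nat.aemeasurable, Real.coe_toNNReal _ hm]
  simp only [Measure.map_smul, Measure.map_dirac' measurable_from_nat]
  rfl

lemma isProbabilityMeasure_poissonRealMeasure {m : ℝ} (hm : 0 ≤ m) :
    IsProbabilityMeasure (poissonRealMeasure m) := by
  rw [poissonRealMeasure_eq_map hm]
  infer_instance

lemma integrable_id_poissonRealMeasure {m : ℝ} (hm : 0 ≤ m) :
    Integrable id (poissonRealMeasure m) := by
  rw [poissonRealMeasure_eq_map hm,
    integrable_map_measure aestronglyMeasurable_id measurable_from_nat.aemeasurable,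
    integrable_poissonMeasure_iff, ← summable_nat_add_iff 1]
  have hsum := hasSum_one_poissonMeasure m.toNNReal
  rw [Real.coe_toNNReal _ hm] at hsum ⊢
  -- `(n + 1) · Po(m){n + 1} = m · Po(m){n}`
  refine (hsum.summable.mul_left m).congr fun n => ?_
  rw [Function.comp_apply, id, Real.norm_natCast, Nat.factorial_succ, pow_succ]
  push_cast
  field_simp

lemma integrable_of_map_eq_poissonRealMeasure {Ω : Type*} [MeasurableSpace Ω] {μ : Measure Ω}
    {X : Ω → ℝ} {m : ℝ} (hm : 0 ≤ m) (hX : Measurable X) (h : μ.map X = poissonRealMeasure m) :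
    Integrable X μ := by
  have := integrable_id_poissonRealMeasure hm
  rwa [← h, integrable_map_measure aestronglyMeasurable_id hX.aemeasurable] at this

lemma cdf_poissonRealMeasure_of_mem_Ico {m t : ℝ} (hm : 0 ≤ m) (ht : t ∈ Ico 0 1) :
    cdf (poissonRealMeasure m) t = Real.exp (-m) := by
  have hzero : (Nat.cast : ℕ → ℝ) ⁻¹' Iic t = {0} := by
    ext n
    simp only [mem_preimage, mem_Iic, mem_singleton_iff]
    constructor
    · intro hn
      exact_mod_cast Nat.lt_one_iff.1 (by exact_mod_cast hn.trans_lt ht.2)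
    · rintro rfl
      exact_mod_cast ht.1
  rw [poissonRealMeasure_eq_map hm, cdf_eq_real,
    map_measureReal_apply measurable_from_nat measurableSet_Iic, hzero,
    poissonMeasure_real_singleton]
  simp [hm]

lemma sq_exp_neg_sub_le_toReal_cramerDist {m l : ℝ} (hm : 0 ≤ m) (hl : 0 ≤ l)
    (h : cramerDist (poissonRealMeasure m) (poissonRealMeasure l) ≠ ∞) :
    (Real.exp (-m) - Real.exp (-l)) ^ 2 ≤
      (cramerDist (poissonRealMeasure m) (poissonRealMeasure l)).toReal := by
  rw [← ENNReal.ofReal_le_iff_le_toReal h]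
  calc ENNReal.ofReal ((Real.exp (-m) - Real.exp (-l)) ^ 2)
      = ∫⁻ t in Ico 0 1, ENNReal.ofReal ((Real.exp (-m) - Real.exp (-l)) ^ 2) := by simp
    _ = ∫⁻ t in Ico 0 1, ENNReal.ofReal
          ((cdf (poissonRealMeasure m) t - cdf (poissonRealMeasure l) t) ^ 2) :=
        setLIntegral_congr_fun measurableSet_Ico fun t ht => by
          rw [cdf_poissonRealMeasure_of_mem_Ico hm ht, cdf_poissonRealMeasure_of_mem_Ico hl ht]
    _ ≤ _ := setLIntegral_le_lintegral _ _

lemma sq_sub_div_nine_le_sq_exp_neg_sub {m l : ℝ} (hm : m ≤ 1) (hl : l ≤ 1) :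
    (l - m) ^ 2 / 9 ≤ (Real.exp (-m) - Real.exp (-l)) ^ 2 := by
  wlog hml : m ≤ l generalizing m l
  · nlinarith [this hl hm (by linarith)]
  have hexp : Real.exp (-l) * (l - m) ≤ Real.exp (-m) - Real.exp (-l) := by
    have := Real.add_one_le_exp (l - m)
    rw [show Real.exp (-m) = Real.exp (-l) * Real.exp (l - m) by rw [← Real.exp_add]; ring_nf]
    nlinarith [Real.exp_pos (-l)]
  have hthird : 1 / 3 ≤ Real.exp (-l) := by
    linarith [Real.exp_le_exp.2 (neg_le_neg hl), Real.exp_neg_one_gt_d9]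
  have hgap : (l - m) / 3 ≤ Real.exp (-m) - Real.exp (-l) := by nlinarith
  calc (l - m) ^ 2 / 9 = ((l - m) / 3) ^ 2 := by ring
    _ ≤ _ := pow_le_pow_left₀ (by linarith) hgap 2

section Independent

variable {Ω : Type*} [MeasurableSpace Ω] {μ : Measure Ω} [IsFiniteMeasure μ] {X Y : Ω → ℝ}

lemma lintegral_ofReal_abs_sub_eq_meanAbsDiff (hX : Measurable X) (hY : Measurable Y)
    (hXY : IndepFun X Y μ) :
    ∫⁻ ω, ENNReal.ofReal |X ω - Y ω| ∂μ = meanAbsDiff (μ.map X) (μ.map Y) := by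
  rw [meanAbsDiff, ← (indepFun_iff_map_prod_eq_prod_map_map hX.aemeasurable hY.aemeasurable).1 hXY,
    lintegral_map (by fun_prop) (hX.prodMk hY)]

lemma integral_abs_sub_eq_toReal_meanAbsDiff (hX : Measurable X) (hY : Measurable Y)
    (hXY : IndepFun X Y μ) :
    ∫ ω, |X ω - Y ω| ∂μ = (meanAbsDiff (μ.map X) (μ.map Y)).toReal := by
  rw [integral_eq_lintegral_of_nonneg_ae (.of_forall fun _ => abs_nonneg _) (by fun_prop),
    lintegral_ofReal_abs_sub_eq_meanAbsDiff hX hY hXY]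

end Independent

theorem poisson_expectation_gap {Ω : Type*} [MeasurableSpace Ω] (μ : Measure Ω)
    [IsProbabilityMeasure μ]
    (m l : ℝ) (hm : 0 ≤ m) (hl : 0 ≤ l) (hsum : l + m ≤ 1)
    (X X' Y Y' : Ω → ℝ)
    (hXm : Measurable X) (hX'm : Measurable X') (hYm : Measurable Y) (hY'm : Measurable Y')
    (hindep : iIndepFun ![X, X', Y, Y'] μ)
    (hX : Measure.map X μ = poissonRealMeasure m)
    (hX' : Measure.map X' μ = poissonRealMeasure m)
    (hY : Measure.map Y μ = poissonRealMeasure l)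
    (hY' : Measure.map Y' μ = poissonRealMeasure l) :
    ∫ ω, (|X ω - Y ω| + |X' ω - Y' ω| - |X ω - X' ω| - |Y ω - Y' ω|) ∂μ ≥
      (1/20) * (l - m) ^ 2 := by
  have hXY : IndepFun X Y μ := by simpa using hindep.indepFun (i := 0) (j := 2) (by decide)
  have hX'Y' : IndepFun X' Y' μ := by simpa using hindep.indepFun (i := 1) (j := 3) (by decide)
  have hXX' : IndepFun X X' μ := by simpa using hindep.indepFun (i := 0) (j := 1) (by decide)
  have hYY' : IndepFun Y Y' μ := by simpa using hindep.indepFun (i := 2) (j := 3) (by decide)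
  have hXi := integrable_of_map_eq_poissonRealMeasure hm hXm hX
  have hX'i := integrable_of_map_eq_poissonRealMeasure hm hX'm hX'
  have hYi := integrable_of_map_eq_poissonRealMeasure hl hYm hY
  have hY'i := integrable_of_map_eq_poissonRealMeasure hl hY'm hY'
  have habs {U V : Ω → ℝ} (hU : Integrable U μ) (hV : Integrable V μ) :
      Integrable (fun ω => |U ω - V ω|) μ := (hU.sub hV).abs
  have hfin : meanAbsDiff (poissonRealMeasure m) (poissonRealMeasure l) ≠ ∞ := by
    rw [← hX, ← hY, ← lintegral_ofReal_abs_sub_eq_meanAbsDiff hXm hYm hXY]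
    exact (habs hXi hYi).lintegral_lt_top.ne
  rw [integral_sub ?_ (habs hYi hY'i), integral_sub ?_ (habs hXi hX'i),
    integral_add (habs hXi hYi) (habs hX'i hY'i),
    integral_abs_sub_eq_toReal_meanAbsDiff hXm hYm hXY, hX, hY,
    integral_abs_sub_eq_toReal_meanAbsDiff hX'm hY'm hX'Y', hX', hY',
    integral_abs_sub_eq_toReal_meanAbsDiff hXm hX'm hXX', hX, hX',
    integral_abs_sub_eq_toReal_meanAbsDiff hYm hY'm hYY', hY, hY']
  · have := isProbabilityMeasure_poissonRealMeasure hm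
    have := isProbabilityMeasure_poissonRealMeasure hl
    have henergy := two_mul_toReal_meanAbsDiff hfin
    have hcramer := sq_exp_neg_sub_le_toReal_cramerDist hm hl (cramerDist_ne_top hfin)
    have hexp := sq_sub_div_nine_le_sq_exp_neg_sub (m := m) (l := l) (by linarith) (by linarith)
    linarith [sq_nonneg (l - m)]
  exacts [(habs hXi hYi).add (habs hX'i hY'i), ((habs hXi hYi).add (habs hX'i hY'i)).sub
    (habs hXi hX'i)]
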